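/- Let A and B be finite nonempty sets of points in ℝ² whose convex hulls intersect, i.e. convexHull(A) ∩ convexHull(B) ≠ ∅. Then h(A ∪ B) ≤ h(A) + h(B). -/

import Mathlib

/-!
A point `x` common to both convex hulls satisfies `⟪x, u⟫ ≤ h_A(u)` and `⟪x, u⟫ ≤ h_B(u)` for
every direction `u`. Hence the support function of `A ∪ B`, the maximum of `h_A` and `h_B`, is at
most `h_A + h_B - ⟪x, u⟫`, and the linear term integrates to zero as `u = (cos θ, sin θ)` makes a
full turn.
-/

noncomputable section

abbrev Plane := EuclideanSpace ℝ (Fin 2)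

noncomputable def perim (C : Set Plane) : ℝ :=
  ∫ θ in (0:ℝ)..(2 * Real.pi),
    sSup ((fun p : Plane => p 0 * Real.cos θ + p 1 * Real.sin θ) '' C)

open Set MeasureTheory

section ConvexHull

variable {E : Type*} [AddCommGroup E] [Module ℝ E] {f : E → ℝ} {s t : Set E} {x : E}

lemma le_csSup_image_of_mem_convexHull (hf : ConvexOn ℝ (convexHull ℝ s) f)
    (hbdd : BddAbove (f '' s)) (hx : x ∈ convexHull ℝ s) : f x ≤ sSup (f '' s) := by
  obtain ⟨y, hy, hxy⟩ := hf.exists_ge_of_mem_convexHull (subset_convexHull ℝ s) hx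
  exact hxy.trans (le_csSup hbdd (mem_image_of_mem f hy))

lemma csSup_image_union_add_le (hf : ConvexOn ℝ univ f) (hs : BddAbove (f '' s))
    (ht : BddAbove (f '' t)) (hx : x ∈ convexHull ℝ s ∩ convexHull ℝ t) :
    sSup (f '' (s ∪ t)) + f x ≤ sSup (f '' s) + sSup (f '' t) := by
  have hxs := le_csSup_image_of_mem_convexHull
    (hf.subset (subset_univ _) (convex_convexHull ℝ s)) hs hx.1
  have hxt := le_csSup_image_of_mem_convexHull
    (hf.subset (subset_univ _) (convex_convexHull ℝ t)) ht hx.2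
  have hne {u : Set E} (hu : x ∈ convexHull ℝ u) : (f '' u).Nonempty :=
    (convexHull_nonempty_iff.1 ⟨x, hu⟩).image f
  rw [image_union, csSup_union hs (hne hx.1) ht (hne hx.2), ← le_sub_iff_add_le]
  exact sup_le (by linarith) (by linarith)

end ConvexHull

def dirFunctional (θ : ℝ) : Plane →ₗ[ℝ] ℝ where
  toFun p := p 0 * Real.cos θ + p 1 * Real.sin θ
  map_add' p q := by simp only [PiLp.add_apply]; ring
  map_smul' c p := by simp only [PiLp.smul_apply, smul_eq_mul, RingHom.id_apply]; ring

def supportFun (S : Set Plane) (θ : ℝ) : ℝ := sSup (dirFunctional θ '' S)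

lemma perim_eq_integral_supportFun (S : Set Plane) :
    perim S = ∫ θ in (0:ℝ)..(2 * Real.pi), supportFun S θ := rfl

lemma continuous_dirFunctional_apply (p : Plane) : Continuous fun θ => dirFunctional θ p := by
  simp only [dirFunctional, LinearMap.coe_mk, AddHom.coe_mk]
  fun_prop

lemma integral_dirFunctional_apply (p : Plane) :
    ∫ θ in (0:ℝ)..(2 * Real.pi), dirFunctional θ p = 0 := by
  simp [dirFunctional, intervalIntegral.integral_add, integral_cos, integral_sin]

lemma continuous_supportFun {S : Set Plane} (hS : S.Finite) : Continuous (supportFun S) := by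
  rcases S.eq_empty_or_nonempty with rfl | hne
  · exact (continuous_const (y := (0 : ℝ))).congr fun θ => by simp [supportFun]
  have hne' : hS.toFinset.Nonempty := by simpa using hne
  convert Continuous.finset_sup'_apply hne' fun p _ => continuous_dirFunctional_apply p
    using 2 with θ
  rw [Finset.sup'_eq_csSup_image, Set.Finite.coe_toFinset]
  rfl

lemma intervalIntegrable_supportFun {S : Set Plane} (hS : S.Finite) (a b : ℝ) :
    IntervalIntegrable (supportFun S) volume a b :=
  (continuous_supportFun hS).intervalIntegrable a b

lemma supportFun_union_add_le {A B : Set Plane} (hA : A.Finite) (hB : B.Finite) {x : Plane}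
    (hx : x ∈ convexHull ℝ A ∩ convexHull ℝ B) (θ : ℝ) :
    supportFun (A ∪ B) θ + dirFunctional θ x ≤ supportFun A θ + supportFun B θ :=
  csSup_image_union_add_le ((dirFunctional θ).convexOn convex_univ)
    (hA.image _).bddAbove (hB.image _).bddAbove hx

theorem perim_union_le_of_hulls_intersect_general
    (A B : Set Plane) (hA : A.Finite)
    (hB : B.Finite)
    (hint : (convexHull ℝ A ∩ convexHull ℝ B).Nonempty) :
    perim (A ∪ B) ≤ perim A + perim B := by
  obtain ⟨x, hx⟩ := hint
  have hAB := intervalIntegrable_supportFun (hA.union hB) 0 (2 * Real.pi)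
  have hx' : IntervalIntegrable (fun θ => dirFunctional θ x) volume 0 (2 * Real.pi) :=
    (continuous_dirFunctional_apply x).intervalIntegrable _ _
  have hA' := intervalIntegrable_supportFun hA 0 (2 * Real.pi)
  have hB' := intervalIntegrable_supportFun hB 0 (2 * Real.pi)
  simp only [perim_eq_integral_supportFun]
  calc ∫ θ in (0:ℝ)..(2 * Real.pi), supportFun (A ∪ B) θ
      = ∫ θ in (0:ℝ)..(2 * Real.pi), (supportFun (A ∪ B) θ + dirFunctional θ x) := by
        rw [intervalIntegral.integral_add hAB hx', integral_dirFunctional_apply, add_zero]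
    _ ≤ ∫ θ in (0:ℝ)..(2 * Real.pi), (supportFun A θ + supportFun B θ) :=
        intervalIntegral.integral_mono_on (by positivity) (hAB.add hx') (hA'.add hB')
          fun θ _ => supportFun_union_add_le hA hB hx θ
    _ = _ := intervalIntegral.integral_add hA' hB'

/-- merging two finite sets with intersecting convex hulls does not
increase the total perimeter. -/
theorem perim_union_le_of_hulls_intersect
    (A B : Set Plane) (hA : A.Finite) (hAne : A.Nonempty)
    (hB : B.Finite) (hBne : B.Nonempty)
    (hint : (convexHull ℝ A ∩ convexHull ℝ B).Nonempty) :
    perim (A ∪ B) ≤ perim A + perim B :=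
  perim_union_le_of_hulls_intersect_general A B hA hB hint

end
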